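/- Let θ ∈ (0, π/2], let f : ℝ → ℝ³ be a twice continuously differentiable curve with ‖f(v)‖ = 1 and ‖f'(v)‖ = 1 for all v ∈ ℝ, and for u > 0 set ξ(u) = cot θ · log u and r(u,v) = u·sin θ·(cos ξ(u) · f(v) + sin ξ(u) · (f(v) × f'(v))). Define N(u,v) = cos(ξ(u) − θ) · f(v) + sin(ξ(u) − θ) · (f(v) × f'(v)). Then ⟨N(u,v), r(u,v)⟩ = cos θ · u · sin θ = cos θ · ‖r(u,v)‖ for all u > 0 and v ∈ ℝ. -/

import Mathlib

open Real RealInnerProductSpace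

/-- The cross product on Euclidean 3-space. -/
noncomputable def cross3 (a b : EuclideanSpace ℝ (Fin 3)) : EuclideanSpace ℝ (Fin 3) :=
  WithLp.toLp 2 ![a 1 * b 2 - a 2 * b 1, a 2 * b 0 - a 0 * b 2, a 0 * b 1 - a 1 * b 0]

/-!
Along the curve, `f v` and `f v × f' v` form an orthonormal pair: `f v ⊥ f' v` because
`‖f‖ ≡ 1`, and the cross product of orthonormal vectors is a unit vector orthogonal to both.
Hence `r(u,v) = u sin θ · e(ξ)` and `N(u,v) = e(ξ - θ)` with `e(α) = cos α · a + sin α · c`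
for an orthonormal pair `a, c`, and `⟨e(α), e(β)⟩ = cos (α - β)`.
-/

section InnerProductSpace

variable {E : Type*} [NormedAddCommGroup E] [InnerProductSpace ℝ E]

theorem inner_deriv_eq_zero_of_norm_eq_const {f : ℝ → E} {v c : ℝ}
    (hf : DifferentiableAt ℝ f v) (hc : ∀ w, ‖f w‖ = c) : ⟪f v, deriv f v⟫ = 0 := by
  have hconst : HasDerivAt (‖f ·‖ ^ 2) 0 v := by
    simpa only [hc] using hasDerivAt_const v (c ^ 2)
  have := hf.hasDerivAt.norm_sq.unique hconst
  linarith

theorem inner_cos_smul_add_sin_smul {a c : E} (ha : ‖a‖ = 1) (hc : ‖c‖ = 1) (hac : ⟪a, c⟫ = 0)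
    (α β : ℝ) : ⟪cos α • a + sin α • c, cos β • a + sin β • c⟫ = cos (α - β) := by
  simp only [inner_add_left, inner_add_right, real_inner_smul_left, real_inner_smul_right,
    real_inner_self_eq_norm_sq, ha, hc, hac, real_inner_comm a c, cos_sub]
  ring

theorem norm_cos_smul_add_sin_smul {a c : E} (ha : ‖a‖ = 1) (hc : ‖c‖ = 1) (hac : ⟪a, c⟫ = 0)
    (α : ℝ) : ‖cos α • a + sin α • c‖ = 1 := by
  have h := inner_cos_smul_add_sin_smul ha hc hac α α
  rwa [sub_self, cos_zero, real_inner_self_eq_norm_sq,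
    pow_eq_one_iff_of_nonneg (norm_nonneg _) two_ne_zero] at h

end InnerProductSpace

section CrossProduct

open EuclideanSpace

theorem cross3_eq_crossProduct (a b : EuclideanSpace ℝ (Fin 3)) :
    cross3 a b = WithLp.toLp 2 (crossProduct a.ofLp b.ofLp) :=
  rfl

theorem inner_self_cross3 (a b : EuclideanSpace ℝ (Fin 3)) : ⟪a, cross3 a b⟫ = 0 := by
  rw [cross3_eq_crossProduct, inner_eq_star_dotProduct, star_trivial, dotProduct_comm,
    dot_self_cross]

theorem inner_cross3_cross3 (a b c d : EuclideanSpace ℝ (Fin 3)) :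
    ⟪cross3 a b, cross3 c d⟫ = ⟪a, c⟫ * ⟪b, d⟫ - ⟪a, d⟫ * ⟪b, c⟫ := by
  simp only [cross3_eq_crossProduct, inner_eq_star_dotProduct, star_trivial, cross_dot_cross,
    dotProduct_comm]

theorem norm_cross3_of_orthonormal {a b : EuclideanSpace ℝ (Fin 3)} (ha : ‖a‖ = 1) (hb : ‖b‖ = 1)
    (hab : ⟪a, b⟫ = 0) : ‖cross3 a b‖ = 1 := by
  have h := inner_cross3_cross3 a b a b
  rwa [real_inner_self_eq_norm_sq, real_inner_self_eq_norm_sq, real_inner_self_eq_norm_sq, ha, hb,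
    hab, zero_mul, sub_zero, one_pow, mul_one,
    pow_eq_one_iff_of_nonneg (norm_nonneg _) two_ne_zero] at h

end CrossProduct

/-- `⟨N(u,v), r(u,v)⟩ = cos θ · u sin θ = cos θ · ‖r(u,v)‖`. -/
theorem inner_normal_position_constant_slope (θ : ℝ) (hθ : θ ∈ Set.Ioc 0 (π / 2))
    (f : ℝ → EuclideanSpace ℝ (Fin 3)) (hf : ContDiff ℝ 2 f)
    (hf1 : ∀ v, ‖f v‖ = 1) (hf'1 : ∀ v, ‖deriv f v‖ = 1)
    (r : ℝ → ℝ → EuclideanSpace ℝ (Fin 3))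
    (hr : ∀ u v, 0 < u → r u v = (u * Real.sin θ) •
      (Real.cos (Real.cot θ * Real.log u) • f v +
       Real.sin (Real.cot θ * Real.log u) • cross3 (f v) (deriv f v)))
    (N : ℝ → ℝ → EuclideanSpace ℝ (Fin 3))
    (hN : ∀ u v, 0 < u → N u v =
      Real.cos (Real.cot θ * Real.log u - θ) • f v +
      Real.sin (Real.cot θ * Real.log u - θ) • cross3 (f v) (deriv f v)) :
    ∀ u v, 0 < u →
      ⟪N u v, r u v⟫ = Real.cos θ * (u * Real.sin θ) ∧
      ⟪N u v, r u v⟫ = Real.cos θ * ‖r u v‖ := by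
  intro u v hu
  have hfv : ⟪f v, deriv f v⟫ = 0 :=
    inner_deriv_eq_zero_of_norm_eq_const ((hf.differentiable two_ne_zero) v) hf1
  have hc : ‖cross3 (f v) (deriv f v)‖ = 1 := norm_cross3_of_orthonormal (hf1 v) (hf'1 v) hfv
  have hfc : ⟪f v, cross3 (f v) (deriv f v)⟫ = 0 := inner_self_cross3 _ _
  have hsin : 0 < u * sin θ :=
    mul_pos hu (sin_pos_of_pos_of_lt_pi hθ.1 (hθ.2.trans_lt (by linarith [pi_pos])))
  have hinner : ⟪N u v, r u v⟫ = cos θ * (u * sin θ) := by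
    rw [hN u v hu, hr u v hu, real_inner_smul_right,
      inner_cos_smul_add_sin_smul (hf1 v) hc hfc, sub_sub_cancel_left, cos_neg, mul_comm]
  have hnorm : ‖r u v‖ = u * sin θ := by
    rw [hr u v hu, norm_smul, norm_cos_smul_add_sin_smul (hf1 v) hc hfc, mul_one,
      Real.norm_of_nonneg hsin.le]
  exact ⟨hinner, hnorm ▸ hinner⟩
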